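/- Let D = ([0,3]_ℤ × [0,6]_ℤ) \ {(3,3)} and B = Bd(D) \ {(2,3)}. For each b ∈ B there exists a c₂-continuous self-map f_b of D with Fix(f_b) = D \ {b}; hence B \ {b} is not a freezing set for (D,c₂), so B is a minimal freezing set for (D,c₂). -/
import Mathlib


/-- `c₁`-adjacency on `ℤ²`: ℓ¹-distance equals 1. -/
def c1Adj (p q : ℤ × ℤ) : Prop := |p.1 - q.1| + |p.2 - q.2| = 1

/-- `c₂`-adjacency on `ℤ²`: the points are distinct and their ℓ∞-distance
equals 1. -/
def c2Adj (p q : ℤ × ℤ) : Prop := p ≠ q ∧ max |p.1 - q.1| |p.2 - q.2| = 1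

/-- The boundary of `D ⊆ ℤ²`. -/
def Bd (D : Set (ℤ × ℤ)) : Set (ℤ × ℤ) := {x ∈ D | ∃ y, y ∉ D ∧ c1Adj y x}

lemma c2Adj_iff (p q : ℤ × ℤ) :
    c2Adj p q ↔ ¬(p.1 = q.1 ∧ p.2 = q.2) ∧
      p.1 - q.1 ≤ 1 ∧ q.1 - p.1 ≤ 1 ∧ p.2 - q.2 ≤ 1 ∧ q.2 - p.2 ≤ 1 := by
  unfold c2Adj
  constructor
  · rintro ⟨hne, hmax⟩
    have h1 : |p.1 - q.1| ≤ 1 := hmax ▸ le_max_left _ _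
    have h2 : |p.2 - q.2| ≤ 1 := hmax ▸ le_max_right _ _
    rw [abs_le] at h1 h2
    exact ⟨fun h => hne (Prod.ext_iff.mpr h), by omega, by omega, by omega, by omega⟩
  · rintro ⟨hne, h1, h2, h3, h4⟩
    have hne' : p ≠ q := fun h => hne ⟨congrArg Prod.fst h, congrArg Prod.snd h⟩
    refine ⟨hne', le_antisymm (max_le (abs_le.2 ⟨by omega, h1⟩) (abs_le.2 ⟨by omega, h3⟩)) ?_⟩
    rcases (show p.1 ≠ q.1 ∨ p.2 ≠ q.2 by
      by_contra h; push_neg at h; exact hne ⟨h.1, h.2⟩) with h | h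
    · exact le_trans (Int.one_le_abs (by omega)) (le_max_left _ _)
    · exact le_trans (Int.one_le_abs (by omega)) (le_max_right _ _)

/-- For `D = ([0,3]_ℤ × [0,6]_ℤ) \ {(3,3)}` and `B = Bd(D) \ {(2,3)}`, each
`b ∈ B` admits a `c₂`-continuous self-map `f_b` of `D` with fixed point set
exactly `D \ {b}`; hence `B \ {b}` is not a freezing set for `(D, c₂)`. -/
theorem stmt13
    (D : Set (ℤ × ℤ)) (hD : D = (Set.Icc 0 3 ×ˢ Set.Icc 0 6) \ {((3 : ℤ), (3 : ℤ))})
    (B : Set (ℤ × ℤ)) (hB : B = Bd D \ {((2 : ℤ), (3 : ℤ))}) :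
    ∀ b ∈ B, ∃ f : ℤ × ℤ → ℤ × ℤ, Set.MapsTo f D D ∧
      (∀ x ∈ D, ∀ x' ∈ D, c2Adj x x' → f x = f x' ∨ c2Adj (f x) (f x')) ∧
      (∀ x ∈ D, (f x = x ↔ x ≠ b)) := by
  subst hD hB
  intro b hb
  obtain ⟨⟨hbD, y, hyD, hyadj⟩, hb23⟩ := hb
  simp only [Set.mem_diff, Set.mem_prod, Set.mem_Icc, Set.mem_singleton_iff,
    Prod.ext_iff, not_and] at hbD hyD hb23
  -- linearize the c1-adjacency
  unfold c1Adj at hyadj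
  rcases abs_cases (y.1 - b.1) with ⟨e1, _⟩ | ⟨e1, _⟩ <;>
    rcases abs_cases (y.2 - b.2) with ⟨e2, _⟩ | ⟨e2, _⟩ <;> rw [e1, e2] at hyadj
  all_goals {
  -- boundary fact
  have hbdy : b.1 = 0 ∨ b.1 = 3 ∨ b.2 = 0 ∨ b.2 = 6 := by
    by_contra h
    push_neg at h
    have : (0 ≤ y.1 ∧ y.1 ≤ 3) ∧ 0 ≤ y.2 ∧ y.2 ≤ 6 := by omega
    have := hyD this
    omega
  set p : ℤ × ℤ := (min 2 (max 1 b.1), min 5 (max 1 b.2)) with hp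
  have hpD : ((0 ≤ p.1 ∧ p.1 ≤ 3) ∧ 0 ≤ p.2 ∧ p.2 ≤ 6) ∧ ¬(p.1 = 3 ∧ p.2 = 3) := by
    simp only [hp]; omega
  have hpb : p ≠ b := by
    simp only [hp, ne_eq, Prod.ext_iff, not_and]
    omega
  refine ⟨fun z => if z = b then p else z, ?_, ?_, ?_⟩
  · intro x hx
    by_cases hxb : x = b
    · show (if x = b then p else x) ∈ _
      rw [if_pos hxb]
      simp only [Set.mem_diff, Set.mem_prod, Set.mem_Icc, Set.mem_singleton_iff,
        Prod.ext_iff, not_and]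
      exact ⟨hpD.1, fun h1 h2 => hpD.2 ⟨h1, h2⟩⟩
    · show (if x = b then p else x) ∈ _
      rw [if_neg hxb]; exact hx
  · intro x hx x' hx' hadj
    simp only [Set.mem_diff, Set.mem_prod, Set.mem_Icc, Set.mem_singleton_iff,
      Prod.ext_iff, not_and] at hx hx'
    rw [c2Adj_iff] at hadj
    show (if x = b then p else x) = (if x' = b then p else x') ∨
      c2Adj (if x = b then p else x) (if x' = b then p else x')
    by_cases hxb : x = b <;> by_cases hxb' : x' = b
    · left; rw [if_pos hxb, if_pos hxb']
    · rw [if_pos hxb, if_neg hxb']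
      subst hxb
      by_cases hxp : x' = p
      · left; rw [hxp]
      · right
        rw [c2Adj_iff]
        have hne : ¬(p.1 = x'.1 ∧ p.2 = x'.2) := by
          intro h; exact hxp (Prod.ext_iff.mpr ⟨h.1.symm, h.2.symm⟩)
        refine ⟨hne, ?_, ?_, ?_, ?_⟩ <;> simp only [hp] <;> omega
    · rw [if_neg hxb, if_pos hxb']
      subst hxb'
      by_cases hxp : x = p
      · left; rw [hxp]
      · right
        rw [c2Adj_iff]
        have hne : ¬(x.1 = p.1 ∧ x.2 = p.2) := by
          intro h; exact hxp (Prod.ext_iff.mpr h)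
        refine ⟨hne, ?_, ?_, ?_, ?_⟩ <;> simp only [hp] <;> omega
    · right
      rw [if_neg hxb, if_neg hxb', c2Adj_iff]
      exact hadj
  · intro x hx
    show (if x = b then p else x) = x ↔ x ≠ b
    by_cases hxb : x = b
    · rw [if_pos hxb, hxb]
      exact ⟨fun h => absurd h hpb, fun h => absurd rfl h⟩
    · rw [if_neg hxb]
      exact ⟨fun _ => hxb, fun _ => rfl⟩
  }
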